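/- With S_{q,d,k} as above, for every fixed d there exists K such that for all k ≥ K and all q ≤ k, S_{q,k−d,k} ≤ 2^{−k}. -/

import Mathlib

/-- The double factorial `(2n-1)!! = (2n)!/(2^n n!)` as a real number. -/
noncomputable def ddf (n : ℕ) : ℝ := ((2 * n).factorial : ℝ) / (2 ^ n * n.factorial)

/-- `S_{q,d,k}`: the sum over ordered tuples `(k_1,…,k_q)` of nonnegative integers with
`k_1 + ⋯ + k_q = k` and each `k_j ≤ k - d`, of `(Π_j (2k_j - 1)!!)/(2k-1)!!`. -/
noncomputable def Sqdk (q d k : ℕ) : ℝ :=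
  (∑ c ∈ (Finset.Nat.antidiagonalTuple q k).filter fun c => ∀ j, c j ≤ k - d,
      ∏ j, ddf (c j)) / ddf k

/-!
Every part of a composition counted by `S_{q,k-d,k}` is at most `d`, so each product
`∏ (2k_j - 1)!!` is at most `(2d)^k`, and there are at most `(d+1)^q ≤ (d+1)^k` such
compositions. Hence `S_{q,k-d,k} ≤ (2d(d+1))^k / (2k-1)!! ≤ (2d(d+1))^k / k!`, and
`(4d(d+1))^k < k!` for large `k`.
-/

open Finset
open scoped Nat

lemma ddf_succ (n : ℕ) : ddf (n + 1) = (2 * n + 1) * ddf n := by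
  have h : 2 * (n + 1) = 2 * n + 1 + 1 := by ring
  rw [ddf, ddf, h, Nat.factorial_succ, Nat.factorial_succ, Nat.factorial_succ]
  field_simp
  push_cast
  ring

lemma ddf_pos (n : ℕ) : 0 < ddf n := by
  induction n with
  | zero => simp [ddf]
  | succ n ih => rw [ddf_succ]; positivity

lemma factorial_le_ddf (n : ℕ) : (n ! : ℝ) ≤ ddf n := by
  induction n with
  | zero => simp [ddf]
  | succ n ih =>
    rw [ddf_succ, Nat.factorial_succ, Nat.cast_mul]
    gcongr
    push_cast
    linarith [n.cast_nonneg (α := ℝ)]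

lemma ddf_le_pow_of_le {m n : ℕ} (h : m ≤ n) : ddf m ≤ (2 * n : ℝ) ^ m := by
  induction m with
  | zero => simp [ddf]
  | succ m ih =>
    have hmn : (m : ℝ) + 1 ≤ n := by exact_mod_cast h
    have hddf := (ddf_pos m).le
    rw [ddf_succ, pow_succ']
    gcongr
    · linarith
    · exact ih (by omega)

lemma prod_ddf_le_of_forall_le {q k d : ℕ} {c : Fin q → ℕ}
    (hc : c ∈ Nat.antidiagonalTuple q k) (hle : ∀ j, c j ≤ d) :
    ∏ j, ddf (c j) ≤ (2 * d : ℝ) ^ k := by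
  rw [← (Nat.mem_antidiagonalTuple.1 hc), ← prod_pow_eq_pow_sum]
  exact prod_le_prod (fun j _ => (ddf_pos _).le) fun j _ => ddf_le_pow_of_le (hle j)

lemma card_filter_antidiagonalTuple_forall_le (q k d : ℕ) :
    #{c ∈ Nat.antidiagonalTuple q k | ∀ j, c j ≤ d} ≤ (d + 1) ^ q := by
  calc #{c ∈ Nat.antidiagonalTuple q k | ∀ j, c j ≤ d}
      ≤ #(Fintype.piFinset fun _ : Fin q => range (d + 1)) := by
        refine card_le_card fun c hc => Fintype.mem_piFinset.2 fun j => ?_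
        exact mem_range_succ_iff.2 ((mem_filter.1 hc).2 j)
    _ = (d + 1) ^ q := by simp

lemma sum_prod_ddf_filter_le {q k : ℕ} (d : ℕ) (hq : q ≤ k) :
    ∑ c ∈ Nat.antidiagonalTuple q k with ∀ j, c j ≤ d, ∏ j, ddf (c j)
      ≤ ((d + 1) * (2 * d) : ℝ) ^ k := by
  calc ∑ c ∈ Nat.antidiagonalTuple q k with ∀ j, c j ≤ d, ∏ j, ddf (c j)
      ≤ #{c ∈ Nat.antidiagonalTuple q k | ∀ j, c j ≤ d} • (2 * d : ℝ) ^ k :=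
        sum_le_card_nsmul _ _ _ fun c hc =>
          prod_ddf_le_of_forall_le (mem_filter.1 hc).1 (mem_filter.1 hc).2
    _ ≤ ((d + 1 : ℕ) ^ k : ℕ) • (2 * d : ℝ) ^ k := by
        gcongr
        exact (card_filter_antidiagonalTuple_forall_le q k d).trans
          (Nat.pow_le_pow_right d.succ_pos hq)
    _ = ((d + 1) * (2 * d) : ℝ) ^ k := by
        rw [nsmul_eq_mul, Nat.cast_pow, Nat.cast_succ, ← mul_pow]

lemma Sqdk_sub_le {q d k : ℕ} (hd : d ≤ k) (hq : q ≤ k) :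
    Sqdk q (k - d) k ≤ ((d + 1) * (2 * d) : ℝ) ^ k / k ! := by
  rw [Sqdk, Nat.sub_sub_self hd]
  exact div_le_div₀ (by positivity) (sum_prod_ddf_filter_le d hq) (by positivity)
    (factorial_le_ddf k)

/-- For every fixed `d` there is `K` such that for all `k ≥ K` and all `q ≤ k`,
`S_{q,k-d,k} ≤ 2^{-k}`. -/
theorem Sqdk_kd_le_two_pow_neg (d : ℕ) :
    ∃ K : ℕ, ∀ k : ℕ, K ≤ k → ∀ q : ℕ, q ≤ k → Sqdk q (k - d) k ≤ ((2 : ℝ) ^ k)⁻¹ := by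
  obtain ⟨K, hK⟩ :=
    (Nat.eventually_pow_lt_factorial_sub (2 * ((d + 1) * (2 * d))) 0).exists_forall_of_atTop
  refine ⟨max K d, fun k hk q hq => ?_⟩
  have hfac : (2 * ((d + 1) * (2 * d)) : ℝ) ^ k ≤ k ! := by
    exact_mod_cast (hK k (le_of_max_le_left hk)).le
  calc Sqdk q (k - d) k ≤ ((d + 1) * (2 * d) : ℝ) ^ k / k ! :=
        Sqdk_sub_le (le_of_max_le_right hk) hq
    _ ≤ ((2 : ℝ) ^ k)⁻¹ := by
        rw [div_le_iff₀ (by positivity), le_inv_mul_iff₀ (by positivity), ← mul_pow]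
        exact hfac
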